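/- Let d ≥ 1 and let Φ⁺(d) be the d ⊗ d maximally entangled state. Then sup_{σ ∈ PPT_2(A:B)} F(Φ⁺(d), σ) = 1/d, where A = B = Fin d. Equivalently, the logarithmic fidelity of binegativity of Φ⁺(d) equals log d. -/

import Mathlib

open Matrix
open scoped ComplexOrder

/-- Total positive semidefinite square root: the PSD square root of `M` if `M` is PSD,
and junk value `0` otherwise. -/
noncomputable def msqrt {n : Type*} [Fintype n] [DecidableEq n]
    (M : Matrix n n ℂ) : Matrix n n ℂ :=
  letI := Classical.dec M.PosSemidef
  if h : M.PosSemidef then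
    (h.1.eigenvectorUnitary : Matrix n n ℂ) * diagonal ((↑) ∘ Real.sqrt ∘ h.1.eigenvalues) *
      (star h.1.eigenvectorUnitary : Matrix n n ℂ) else 0

/-- The trace norm `‖M‖₁ = tr √(Mᴴ M)` of a complex matrix, as a real number. -/
noncomputable def traceNorm {n : Type*} [Fintype n] [DecidableEq n]
    (M : Matrix n n ℂ) : ℝ :=
  (msqrt (Mᴴ * M)).trace.re

/-- The partial transpose over the second party `B`:
`M^{T_B}((a,b),(a',b')) = M((a,b'),(a',b))`. -/
def ptB {A B : Type*} (M : Matrix (A × B) (A × B) ℂ) : Matrix (A × B) (A × B) ℂ :=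
  fun x y => M (x.1, y.2) (y.1, x.2)

/-- Uhlmann fidelity `F(ρ,σ) = (tr √(√σ ρ √σ))²` between positive semidefinite matrices. -/
noncomputable def fidelity {n : Type*} [Fintype n] [DecidableEq n]
    (ρ σ : Matrix n n ℂ) : ℝ :=
  ((msqrt (msqrt σ * ρ * msqrt σ)).trace.re) ^ 2

/-- The set `PPT₂(A:B)`: positive semidefinite `σ` such that there exists `ω` with
`−ω ⪯ σ^{T_B} ⪯ ω` and `‖ω^{T_B}‖₁ ≤ 1`. -/
def PPT2set {A B : Type*} [Fintype A] [Fintype B] [DecidableEq A] [DecidableEq B] :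
    Set (Matrix (A × B) (A × B) ℂ) :=
  {σ | σ.PosSemidef ∧ ∃ ω : Matrix (A × B) (A × B) ℂ,
    (ω - ptB σ).PosSemidef ∧ (ω + ptB σ).PosSemidef ∧ traceNorm (ptB ω) ≤ 1}

/-- The `d ⊗ d` maximally entangled state `Φ⁺(d)`:
`Φ⁺(d)((i,k),(j,l)) = 1/d` if `i = k` and `j = l`, and `0` otherwise. -/
noncomputable def MES (d : ℕ) : Matrix (Fin d × Fin d) (Fin d × Fin d) ℂ :=
  fun x y => if x.1 = x.2 ∧ y.1 = y.2 then ((d : ℂ))⁻¹ else 0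

/-! Since `Φ⁺` is pure, `F(Φ⁺, σ) = tr(σ Φ⁺) = tr(σ^{T_B} (Φ⁺)^{T_B}) = tr(S σ^{T_B}) / d`,
where `S` is the swap operator. Writing `S = P₊ - P₋` with the projections `P± = (1 ± S) / 2`,
the constraint `-ω ≤ σ^{T_B} ≤ ω` gives `tr(S σ^{T_B}) ≤ tr ω = tr ω^{T_B} ≤ ‖ω^{T_B}‖₁ ≤ 1`.
Equality holds for the isotropic state `σ = (Φ⁺ + 1/d) / (d + 1)`: its partial transpose is a
positive multiple of `P₊`, so `ω = σ^{T_B}` is admissible with `‖ω^{T_B}‖₁ = tr σ = 1`, and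
`tr(σ Φ⁺) = 1/d`. -/

section Sqrt

open scoped MatrixOrder

variable {n : Type*} [Fintype n] [DecidableEq n]

lemma msqrt_eq_cfcSqrt {M : Matrix n n ℂ} (hM : M.PosSemidef) : msqrt M = CFC.sqrt M := by
  rw [msqrt, dif_pos hM, CFC.sqrt_eq_cfc, cfc_nnreal_eq_real _ M, hM.1.cfc_eq, IsHermitian.cfc,
    Unitary.conjStarAlgAut_apply]
  congr 3
  funext i
  simp [Real.coe_sqrt, hM.eigenvalues_nonneg i]

lemma traceNorm_eq_re_trace_cfcAbs (M : Matrix n n ℂ) : traceNorm M = (CFC.abs M).trace.re := by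
  rw [traceNorm, msqrt_eq_cfcSqrt (posSemidef_conjTranspose_mul_self M)]
  rfl

lemma re_trace_le_traceNorm {N : Matrix n n ℂ} (hN : N.IsHermitian) :
    N.trace.re ≤ traceNorm N := by
  have h : (CFC.abs N - N).PosSemidef := by
    rw [CFC.abs_sub_self N hN.isSelfAdjoint]
    exact (smul_nonneg zero_le_two (CFC.negPart_nonneg N)).posSemidef
  rw [traceNorm_eq_re_trace_cfcAbs, ← sub_nonneg, ← Complex.sub_re, ← trace_sub]
  exact (Complex.nonneg_iff.mp h.trace_nonneg).1

lemma traceNorm_of_posSemidef {M : Matrix n n ℂ} (hM : M.PosSemidef) :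
    traceNorm M = M.trace.re := by
  rw [traceNorm_eq_re_trace_cfcAbs, CFC.abs_of_nonneg M hM.nonneg]

lemma re_trace_msqrt_vecMulVec_self_star (w : n → ℂ) :
    (msqrt (vecMulVec w (star w))).trace.re = √(star w ⬝ᵥ w).re := by
  set M := vecMulVec w (star w)
  obtain rfl | hw := eq_or_ne w 0
  · simp [M, msqrt_eq_cfcSqrt PosSemidef.zero]
  set t := (star w ⬝ᵥ w).re
  have ht : star w ⬝ᵥ w = t :=
    Complex.ext rfl (Complex.nonneg_iff.mp (dotProduct_star_self_nonneg w)).2.symm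
  have htpos : 0 < t := (Complex.pos_iff.mp (dotProduct_star_self_pos_iff.mpr hw)).1
  have hMM : M * M = (t : ℂ) • M := by
    rw [vecMulVec_mul_vecMulVec, ← ht, vecMulVec_smul]
  have hsqrt : msqrt M = (√t : ℂ)⁻¹ • M := by
    rw [msqrt_eq_cfcSqrt (posSemidef_vecMulVec_self_star w)]
    refine CFC.sqrt_unique ?_ ?_
    · rw [smul_mul_smul_comm, hMM, smul_smul]
      have : ((√t : ℂ))⁻¹ * (√t : ℂ)⁻¹ * t = 1 := by
        rw [← mul_inv, ← Complex.ofReal_mul, Real.mul_self_sqrt htpos.le,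
          inv_mul_cancel₀ (by exact_mod_cast htpos.ne')]
      rw [this, one_smul]
    · exact ((posSemidef_vecMulVec_self_star w).smul (by positivity)).nonneg
  rw [hsqrt, trace_smul, trace_vecMulVec, dotProduct_comm, ht, smul_eq_mul, ← Complex.ofReal_inv,
    ← Complex.ofReal_mul, Complex.ofReal_re, inv_mul_eq_div, Real.div_sqrt]

lemma fidelity_vecMulVec_self_star {σ : Matrix n n ℂ} (hσ : σ.PosSemidef) (v : n → ℂ) :
    fidelity (vecMulVec v (star v)) σ = (σ * vecMulVec v (star v)).trace.re := by
  set S := CFC.sqrt σ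
  have hS : Sᴴ = S := (CFC.sqrt_nonneg σ).posSemidef.isHermitian.eq
  have hconj : S * vecMulVec v (star v) * S = vecMulVec (S *ᵥ v) (star (S *ᵥ v)) := by
    rw [mul_vecMulVec, vecMulVec_mul, star_mulVec, hS]
  have hnorm : star (S *ᵥ v) ⬝ᵥ (S *ᵥ v) = (σ * vecMulVec v (star v)).trace := by
    rw [star_mulVec, hS, ← dotProduct_mulVec, mulVec_mulVec, CFC.sqrt_mul_sqrt_self σ hσ.nonneg,
      mul_vecMulVec, trace_vecMulVec, dotProduct_comm]
  rw [fidelity, msqrt_eq_cfcSqrt hσ, hconj, re_trace_msqrt_vecMulVec_self_star, hnorm,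
    Real.sq_sqrt (hnorm ▸ (Complex.nonneg_iff.mp (dotProduct_star_self_nonneg _)).1)]

end Sqrt

section Involution

variable {n : Type*} [Fintype n]

lemma isStarProjection_half_one_add {A : Type*} [Ring A] [StarRing A] [Algebra ℂ A]
    [StarModule ℂ A] {F : A} (hF : IsSelfAdjoint F) (hF2 : F * F = 1) :
    IsStarProjection ((2⁻¹ : ℂ) • (1 + F)) where
  isIdempotentElem := by
    have hsq : (1 + F) * (1 + F) = (2 : ℂ) • (1 + F) := by
      rw [two_smul, add_mul, mul_add, mul_add, hF2, one_mul, mul_one, one_mul]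
      abel
    rw [IsIdempotentElem, smul_mul_smul_comm, hsq, smul_smul]
    norm_num
  isSelfAdjoint :=
    (by simp [IsSelfAdjoint] : IsSelfAdjoint (2⁻¹ : ℂ)).smul ((IsSelfAdjoint.one A).add hF)

lemma trace_mul_nonneg_of_isStarProjection {P X : Matrix n n ℂ} (hP : IsStarProjection P)
    (hX : X.PosSemidef) : 0 ≤ (P * X).trace := by
  have h : (P * X).trace = (Pᴴ * X * P).trace := by
    rw [trace_mul_cycle, ← star_eq_conjTranspose, hP.isSelfAdjoint.star_eq,
      hP.isIdempotentElem.eq]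
  exact h ▸ (hX.conjTranspose_mul_mul_same P).trace_nonneg

lemma re_trace_mul_le_of_involution [DecidableEq n] {F τ ω : Matrix n n ℂ} (hF : IsSelfAdjoint F)
    (hF2 : F * F = 1) (h₁ : (ω - τ).PosSemidef) (h₂ : (ω + τ).PosSemidef) :
    (F * τ).trace.re ≤ ω.trace.re := by
  set P := (2⁻¹ : ℂ) • (1 + F)
  set Q := (2⁻¹ : ℂ) • (1 + -F)
  have hP : IsStarProjection P := isStarProjection_half_one_add hF hF2
  have hQ : IsStarProjection Q := isStarProjection_half_one_add hF.neg (by rw [neg_mul_neg, hF2])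
  have hsplit : ω - F * τ = P * (ω - τ) + Q * (ω + τ) := by
    simp only [P, Q, Matrix.smul_mul, add_mul, one_mul, neg_mul, mul_sub, mul_add]
    module
  have := add_nonneg (trace_mul_nonneg_of_isStarProjection hP h₁)
    (trace_mul_nonneg_of_isStarProjection hQ h₂)
  rw [← trace_add, ← hsplit, trace_sub] at this
  simpa using (Complex.nonneg_iff.mp this).1

end Involution

section PartialTranspose

variable {A B : Type*}

lemma ptB_ptB (M : Matrix (A × B) (A × B) ℂ) : ptB (ptB M) = M := rfl

lemma trace_ptB [Fintype A] [Fintype B] (M : Matrix (A × B) (A × B) ℂ) :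
    (ptB M).trace = M.trace :=
  rfl

lemma conjTranspose_ptB (M : Matrix (A × B) (A × B) ℂ) : (ptB M)ᴴ = ptB Mᴴ := rfl

lemma Matrix.IsHermitian.ptB {M : Matrix (A × B) (A × B) ℂ} (hM : M.IsHermitian) :
    (ptB M).IsHermitian := by
  rw [IsHermitian, conjTranspose_ptB, hM.eq]

lemma ptB_one [DecidableEq A] [DecidableEq B] : ptB (1 : Matrix (A × B) (A × B) ℂ) = 1 := by
  ext x y
  simp only [ptB, one_apply, Prod.ext_iff]
  grind

lemma trace_ptB_mul_ptB [Fintype A] [Fintype B] (X Y : Matrix (A × B) (A × B) ℂ) :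
    (ptB X * ptB Y).trace = (X * Y).trace := by
  simp only [trace, diag, mul_apply, ← Fintype.sum_prod_type']
  let e : (A × B) × (A × B) ≃ (A × B) × (A × B) :=
    ⟨fun p => ((p.1.1, p.2.2), (p.2.1, p.1.2)), fun p => ((p.1.1, p.2.2), (p.2.1, p.1.2)),
      fun _ => rfl, fun _ => rfl⟩
  exact Fintype.sum_equiv e _ _ fun _ => rfl

end PartialTranspose

section Swap

variable (n : Type*) [DecidableEq n]

abbrev swapMatrix : Matrix (n × n) (n × n) ℂ := Equiv.Perm.permMatrix ℂ (Equiv.prodComm n n)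

variable {n}

lemma isSelfAdjoint_swapMatrix : IsSelfAdjoint (swapMatrix n) := by
  rw [IsSelfAdjoint, star_eq_conjTranspose, conjTranspose_permMatrix]
  rfl

lemma swapMatrix_mul_self [Fintype n] : swapMatrix n * swapMatrix n = 1 := by
  rw [← permMatrix_mul, show Equiv.prodComm n n * Equiv.prodComm n n = 1 from rfl, permMatrix_one]

end Swap

section MaximallyEntangled

variable (d : ℕ)

noncomputable def mesVec : Fin d × Fin d → ℂ := fun x => if x.1 = x.2 then (√d : ℂ)⁻¹ else 0

lemma MES_eq_vecMulVec : MES d = vecMulVec (mesVec d) (star (mesVec d)) := by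
  ext x y
  have h : (√d : ℂ)⁻¹ * (√d : ℂ)⁻¹ = (d : ℂ)⁻¹ := by
    rw [← mul_inv, ← Complex.ofReal_mul, Real.mul_self_sqrt d.cast_nonneg, Complex.ofReal_natCast]
  by_cases hx : x.1 = x.2 <;> by_cases hy : y.1 = y.2 <;>
    simp [MES, mesVec, vecMulVec_apply, hx, hy, h]

lemma ptB_MES : ptB (MES d) = (d : ℂ)⁻¹ • swapMatrix (Fin d) := by
  ext x y
  simp only [ptB, MES, Matrix.smul_apply, PEquiv.toMatrix_apply, Equiv.toPEquiv_apply,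
    Option.mem_def, Option.some.injEq, Equiv.prodComm_apply, Prod.ext_iff, Prod.fst_swap,
    Prod.snd_swap, smul_eq_mul, mul_ite, mul_one, mul_zero]
  exact if_congr (by tauto) rfl rfl

variable {d}

lemma trace_MES (hd : d ≠ 0) : (MES d).trace = 1 := by
  simp [trace, MES, Fintype.sum_prod_type, hd]

lemma MES_mul_self (hd : d ≠ 0) : MES d * MES d = MES d := by
  rw [MES_eq_vecMulVec, vecMulVec_mul_vecMulVec, dotProduct_comm, ← trace_vecMulVec,
    ← MES_eq_vecMulVec, trace_MES hd, one_smul, MES_eq_vecMulVec]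

end MaximallyEntangled

section Bounds

variable {d : ℕ}

lemma fidelity_MES_le_of_mem_PPT2set {σ : Matrix (Fin d × Fin d) (Fin d × Fin d) ℂ}
    (hσ : σ ∈ PPT2set) : fidelity (MES d) σ ≤ (d : ℝ)⁻¹ := by
  obtain ⟨hσpsd, ω, h₁, h₂, hω⟩ := hσ
  have hωherm : ω.IsHermitian := by
    have h : ω = (2⁻¹ : ℝ) • ((ω - ptB σ) + (ω + ptB σ)) := by module
    rw [h]
    exact (IsSelfAdjoint.all _).smul (h₁.add h₂).isHermitian
  calc fidelity (MES d) σ = (σ * MES d).trace.re := by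
        rw [MES_eq_vecMulVec, fidelity_vecMulVec_self_star hσpsd]
    _ = (d : ℝ)⁻¹ * (swapMatrix (Fin d) * ptB σ).trace.re := by
        rw [← trace_ptB_mul_ptB, ptB_MES, Matrix.mul_smul, trace_smul, trace_mul_comm, smul_eq_mul,
          ← Complex.ofReal_natCast, ← Complex.ofReal_inv, Complex.re_ofReal_mul]
    _ ≤ (d : ℝ)⁻¹ * ω.trace.re := by
        refine mul_le_mul_of_nonneg_left ?_ (by positivity)
        exact re_trace_mul_le_of_involution isSelfAdjoint_swapMatrix swapMatrix_mul_self h₁ h₂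
    _ ≤ (d : ℝ)⁻¹ := by
        refine mul_le_of_le_one_right (by positivity) ?_
        rw [← trace_ptB]
        exact (re_trace_le_traceNorm hωherm.ptB).trans hω

end Bounds

noncomputable def isotropicState (d : ℕ) : Matrix (Fin d × Fin d) (Fin d × Fin d) ℂ :=
  ((d : ℂ) + 1)⁻¹ • (MES d + (d : ℂ)⁻¹ • 1)

section Witness

open scoped MatrixOrder

variable {d : ℕ}

lemma posSemidef_isotropicState : (isotropicState d).PosSemidef := by
  rw [isotropicState, MES_eq_vecMulVec]
  exact ((posSemidef_vecMulVec_self_star _).add (PosSemidef.one.smul (by positivity))).smul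
    (by positivity)

lemma posSemidef_ptB_isotropicState : (ptB (isotropicState d)).PosSemidef := by
  have h : ptB (isotropicState d) =
      (2 * ((d : ℂ) + 1)⁻¹ * (d : ℂ)⁻¹) • ((2⁻¹ : ℂ) • (1 + swapMatrix (Fin d))) := by
    rw [isotropicState]
    change ((d : ℂ) + 1)⁻¹ • (ptB (MES d) + (d : ℂ)⁻¹ • ptB 1) = _
    rw [ptB_MES, ptB_one]
    module
  rw [h]
  exact ((isStarProjection_half_one_add isSelfAdjoint_swapMatrix swapMatrix_mul_self).nonneg
    |>.posSemidef).smul (by positivity)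

lemma trace_isotropicState (hd : d ≠ 0) : (isotropicState d).trace = 1 := by
  have hd' : (d : ℂ) ≠ 0 := Nat.cast_ne_zero.mpr hd
  rw [isotropicState, trace_smul, trace_add, trace_smul, trace_MES hd, trace_one,
    Fintype.card_prod, Fintype.card_fin, smul_eq_mul, smul_eq_mul]
  push_cast
  field_simp
  ring

lemma trace_isotropicState_mul_MES (hd : d ≠ 0) :
    (isotropicState d * MES d).trace = (d : ℂ)⁻¹ := by
  rw [isotropicState, Matrix.smul_mul, add_mul, Matrix.smul_mul, one_mul, MES_mul_self hd,
    trace_smul, trace_add, trace_smul, trace_MES hd, smul_eq_mul, smul_eq_mul]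
  field_simp

lemma isotropicState_mem_PPT2set (hd : d ≠ 0) : isotropicState d ∈ PPT2set := by
  refine ⟨posSemidef_isotropicState, ptB (isotropicState d), ?_, ?_, ?_⟩
  · rw [sub_self]
    exact PosSemidef.zero
  · exact posSemidef_ptB_isotropicState.add posSemidef_ptB_isotropicState
  · rw [ptB_ptB, traceNorm_of_posSemidef posSemidef_isotropicState, trace_isotropicState hd,
      Complex.one_re]

lemma fidelity_MES_isotropicState (hd : d ≠ 0) :
    fidelity (MES d) (isotropicState d) = (d : ℝ)⁻¹ := by
  rw [MES_eq_vecMulVec, fidelity_vecMulVec_self_star posSemidef_isotropicState,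
    ← MES_eq_vecMulVec, trace_isotropicState_mul_MES hd, ← Complex.ofReal_natCast,
    ← Complex.ofReal_inv, Complex.ofReal_re]

end Witness

theorem sup_fidelity_mes_PPT2 (d : ℕ) (hd : 1 ≤ d) :
    sSup {x : ℝ | ∃ σ ∈ PPT2set (A := Fin d) (B := Fin d), fidelity (MES d) σ = x}
        = ((d : ℝ))⁻¹ ∧
      -Real.log (sSup {x : ℝ | ∃ σ ∈ PPT2set (A := Fin d) (B := Fin d),
          fidelity (MES d) σ = x}) = Real.log d := by
  have hsup : sSup {x : ℝ | ∃ σ ∈ PPT2set (A := Fin d) (B := Fin d), fidelity (MES d) σ = x}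
      = (d : ℝ)⁻¹ := by
    refine IsGreatest.csSup_eq ⟨?_, ?_⟩
    · exact ⟨isotropicState d, isotropicState_mem_PPT2set (by omega),
        fidelity_MES_isotropicState (by omega)⟩
    · rintro x ⟨σ, hσ, rfl⟩
      exact fidelity_MES_le_of_mem_PPT2set hσ
  exact ⟨hsup, by rw [hsup, Real.log_inv, neg_neg]⟩
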